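/- arXiv:2403.15555 — 2 statements merged into one kernel-verified Lean document; each statement's English description precedes it below -/
import Mathlib

section
/- Let g satisfy ∂₀'g = (C(γ−1)/(2B))g and ∂₁'g = (Cγβ/(2B))g with B ≠ 0, β ∈ (0,1), γ = 1/√(1−β²). Then F' = Cγ(∂₀'g/g − β∂₁'g/g) + B(∂₁'²g/g − ∂₀'²g/g) vanishes identically. -/
/-!
Both first derivatives of `g` are constant multiples of `g`, so every term of `F'` is a constant
times `g / g` and `F'` reduces to an algebraic expression in `B, C, β, γ`. Writing `C = 2aB`, that
expression is `a² B (γ² (1 - β²) - 1)`, which vanishes by the definition of the Lorentz factor.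
-/

lemma deriv_deriv_of_deriv_eq_const_mul {𝕜 𝕜' : Type*} [NontriviallyNormedField 𝕜]
    [NontriviallyNormedField 𝕜'] [NormedAlgebra 𝕜 𝕜'] {f : 𝕜 → 𝕜'} {k : 𝕜'}
    (hf : ∀ x, deriv f x = k * f x) (x : 𝕜) :
    deriv (deriv f) x = k ^ 2 * f x := by
  rw [funext hf, deriv_const_mul_field, hf]
  ring

lemma lorentz_factor_sq_mul {β γ : ℝ} (hβ : β ^ 2 < 1) (hγ : γ = 1 / √(1 - β ^ 2)) :
    γ ^ 2 * (1 - β ^ 2) = 1 := by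
  have hpos : 0 < 1 - β ^ 2 := by linarith
  rw [hγ, div_pow, Real.sq_sqrt hpos.le]
  field_simp

lemma zeroth_order_coeff_eq_zero {K : Type*} [Field K] [CharZero K] {B C β γ : K} (hB : B ≠ 0)
    (hγ : γ ^ 2 * (1 - β ^ 2) = 1) :
    C * γ * (C * (γ - 1) / (2 * B) - β * (C * γ * β / (2 * B)))
      + B * ((C * γ * β / (2 * B)) ^ 2 - (C * (γ - 1) / (2 * B)) ^ 2) = 0 := by
  field_simp
  linear_combination C ^ 2 * hγ

theorem Fprime_vanishes (B C : ℂ) (hB : B ≠ 0) (β : ℝ) (hβ : β ∈ Set.Ioo (0:ℝ) 1)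
    (γ : ℝ) (hγ : γ = 1 / Real.sqrt (1 - β ^ 2))
    (g : ℝ → ℝ → ℂ)
    (h0 : ∀ x0 x1 : ℝ, deriv (fun s => g s x1) x0 = (C * ((γ : ℂ) - 1) / (2 * B)) * g x0 x1)
    (h1 : ∀ x0 x1 : ℝ, deriv (fun s => g x0 s) x1 = (C * (γ : ℂ) * (β : ℂ) / (2 * B)) * g x0 x1) :
    ∀ x0 x1 : ℝ,
      C * (γ : ℂ) * (deriv (fun s => g s x1) x0 / g x0 x1
        - (β : ℂ) * deriv (fun s => g x0 s) x1 / g x0 x1)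
      + B * (deriv (fun s => deriv (fun s' => g x0 s') s) x1 / g x0 x1
        - deriv (fun s => deriv (fun s' => g s' x1) s) x0 / g x0 x1) = 0 := by
  intro x0 x1
  have hβ_sq : β ^ 2 < 1 := by nlinarith [hβ.1, hβ.2]
  have hγ_sq : (γ : ℂ) ^ 2 * (1 - (β : ℂ) ^ 2) = 1 := by
    exact_mod_cast lorentz_factor_sq_mul hβ_sq hγ
  rw [deriv_deriv_of_deriv_eq_const_mul (fun s => h0 s x1),
    deriv_deriv_of_deriv_eq_const_mul (h1 x0), h0, h1]
  linear_combination (g x0 x1 / g x0 x1) * zeroth_order_coeff_eq_zero (C := C) hB hγ_sq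
end

section
/- Let m, c, ℏ > 0, v ∈ ℝ³ with |v| < c, γ = 1/√(1−|v|²/c²), and Ψ₀ ∈ ℂ. The function Ψ(r,t) = Ψ₀·exp[(i/ℏ)(−(γ−1)mc²t + γm v·r)] is a plane wave exp(i(k·r − ωt)) (times Ψ₀) with ℏω = (γ−1)mc² and ℏk = γm v; moreover this Ψ satisfies the free Lorentz covariant Schrödinger equation −(ℏ²/(2mc²))∂ₜ²Ψ + iℏ∂ₜΨ = −(ℏ²/(2m))∇²Ψ. -/
/-!
The boosted wave function is the plane wave `Ψ₀ exp(i(k·r − ωt))` with `ℏω = (γ−1)mc²` and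
`ℏk = γmv`. On a plane wave `∂ₜ` acts as `−iω` and `∂ᵢ` as `ikᵢ`, so the equation reduces to the
dispersion relation `ℏ²ω²/(2mc²) + ℏω = ℏ²|k|²/(2m)`, i.e. `E_kin (E_kin + 2mc²) = c²|p|²`.
With `E_kin = (γ−1)mc²` and `p = γmv` this is `(γ²−1)c² = γ²|v|²`, which is the definition of `γ`.
-/

open Complex

section PlaneWave

variable {ι : Type*} [Fintype ι]

noncomputable def planeWave (A : ℂ) (k : ι → ℝ) (ω : ℝ) (r : ι → ℝ) (t : ℝ) : ℂ :=
  A * exp (I * ((↑(∑ i, k i * r i) : ℂ) - ω * t))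

/-- The free Lorentz covariant Schrödinger equation; `∇²` is the sum of second derivatives along
the coordinate lines through `r`. -/
def SolvesFreeLCS [DecidableEq ι] (m c ℏ : ℝ) (Ψ : (ι → ℝ) → ℝ → ℂ) : Prop :=
  ∀ r t,
    -(((ℏ : ℂ) ^ 2) / (2 * (m : ℂ) * (c : ℂ) ^ 2)) *
        deriv (fun s => deriv (fun s' => Ψ r s') s) t
      + I * (ℏ : ℂ) * deriv (fun s => Ψ r s) t =
    -(((ℏ : ℂ) ^ 2) / (2 * (m : ℂ))) *
        ∑ i, deriv (fun s => deriv (fun s' => Ψ (Function.update r i s') t) s) (r i)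

theorem deriv_mul_cexp_affine (A K L : ℂ) (x : ℝ) :
    deriv (fun s : ℝ => A * exp (K + L * s)) x = L * (A * exp (K + L * x)) := by
  have hlin : HasDerivAt (fun s : ℝ => K + L * (s : ℂ)) L x := by
    simpa using ((hasDerivAt_id x).ofReal_comp.const_mul L).const_add K
  rw [(hlin.cexp.const_mul A).deriv]
  ring

theorem deriv_deriv_mul_cexp_affine (A K L : ℂ) (x : ℝ) :
    deriv (fun s => deriv (fun s' : ℝ => A * exp (K + L * s')) s) x
      = L ^ 2 * (A * exp (K + L * x)) := by
  simp_rw [deriv_mul_cexp_affine, ← mul_assoc]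
  rw [deriv_mul_cexp_affine]
  ring

theorem sum_mul_update [DecidableEq ι] (k r : ι → ℝ) (i : ι) (s : ℝ) :
    ∑ j, k j * Function.update r i s j = ∑ j, k j * r j + k i * (s - r i) := by
  have hterm : ∀ j, k j * Function.update r i s j
      = k j * r j + if j = i then k i * (s - r i) else 0 := by
    intro j
    rcases eq_or_ne j i with rfl | hji
    · simp only [Function.update_self, if_true]; ring
    · simp [hji]
  simp only [hterm, Finset.sum_add_distrib, Finset.sum_ite_eq', Finset.mem_univ, if_true]

theorem planeWave_eq_cexp_affine_time (A : ℂ) (k : ι → ℝ) (ω : ℝ) (r : ι → ℝ) (s : ℝ) :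
    planeWave A k ω r s = A * exp (I * ↑(∑ i, k i * r i) + (-I * ω) * s) := by
  rw [planeWave]; congr 2; ring

theorem planeWave_update_eq_cexp_affine [DecidableEq ι] (A : ℂ) (k : ι → ℝ) (ω : ℝ) (r : ι → ℝ) (i : ι)
    (t s : ℝ) :
    planeWave A k ω (Function.update r i s) t
      = A * exp (I * (↑(∑ j, k j * r j - k i * r i) - ω * t) + (I * k i) * s) := by
  rw [planeWave, sum_mul_update]; push_cast; congr 2; ring

theorem deriv_planeWave_time (A : ℂ) (k : ι → ℝ) (ω : ℝ) (r : ι → ℝ) (t : ℝ) :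
    deriv (fun s => planeWave A k ω r s) t = -I * ω * planeWave A k ω r t := by
  simp_rw [planeWave_eq_cexp_affine_time]; exact deriv_mul_cexp_affine _ _ _ _

theorem deriv_deriv_planeWave_time (A : ℂ) (k : ι → ℝ) (ω : ℝ) (r : ι → ℝ) (t : ℝ) :
    deriv (fun s => deriv (fun s' => planeWave A k ω r s') s) t
      = -(ω : ℂ) ^ 2 * planeWave A k ω r t := by
  simp_rw [planeWave_eq_cexp_affine_time]
  rw [deriv_deriv_mul_cexp_affine, neg_mul, neg_sq, mul_pow, I_sq]
  ring

theorem deriv_deriv_planeWave_update [DecidableEq ι] (A : ℂ) (k : ι → ℝ) (ω : ℝ) (r : ι → ℝ)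
    (i : ι) (t : ℝ) :
    deriv (fun s => deriv (fun s' => planeWave A k ω (Function.update r i s') t) s) (r i)
      = -(k i : ℂ) ^ 2 * planeWave A k ω r t := by
  simp_rw [planeWave_update_eq_cexp_affine]
  rw [deriv_deriv_mul_cexp_affine, ← planeWave_update_eq_cexp_affine, Function.update_eq_self,
    mul_pow, I_sq]
  ring

theorem solvesFreeLCS_planeWave [DecidableEq ι] {m c ℏ ω : ℝ} {k : ι → ℝ}
    (hdisp : ℏ ^ 2 * ω ^ 2 / (2 * m * c ^ 2) + ℏ * ω = ℏ ^ 2 * (∑ i, k i ^ 2) / (2 * m))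
    (A : ℂ) : SolvesFreeLCS m c ℏ (planeWave A k ω) := by
  intro r t
  have hdisp' : (ℏ : ℂ) ^ 2 * ω ^ 2 / (2 * m * c ^ 2) + ℏ * ω
      = ℏ ^ 2 * (∑ i, (k i : ℂ) ^ 2) / (2 * m) := by exact_mod_cast hdisp
  rw [deriv_deriv_planeWave_time, deriv_planeWave_time]
  simp only [deriv_deriv_planeWave_update, ← Finset.sum_mul, Finset.sum_neg_distrib]
  linear_combination planeWave A k ω r t * hdisp' - ℏ * ω * planeWave A k ω r t * I_sq

end PlaneWave

theorem lorentzFactor_sq_mul {c s γ : ℝ} (hc : 0 < c) (hs : √s < c)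
    (hγ : γ = 1 / √(1 - s / c ^ 2)) : γ ^ 2 * (1 - s / c ^ 2) = 1 := by
  have hpos : 0 < 1 - s / c ^ 2 := by
    rw [sub_pos, div_lt_one (by positivity)]
    exact (Real.sqrt_lt' hc).1 hs
  rw [hγ, div_pow, one_pow, Real.sq_sqrt hpos.le, one_div_mul_cancel hpos.ne']

theorem kinetic_dispersion {ι : Type*} [Fintype ι] {m c ℏ γ ω : ℝ} {v k : ι → ℝ}
    (hm : m ≠ 0) (hc : c ≠ 0) (hγ : γ ^ 2 * (1 - (∑ i, v i ^ 2) / c ^ 2) = 1)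
    (hω : ℏ * ω = (γ - 1) * m * c ^ 2) (hk : ∀ i, ℏ * k i = γ * m * v i) :
    ℏ ^ 2 * ω ^ 2 / (2 * m * c ^ 2) + ℏ * ω = ℏ ^ 2 * (∑ i, k i ^ 2) / (2 * m) := by
  have hp : ℏ ^ 2 * ∑ i, k i ^ 2 = (γ * m) ^ 2 * ∑ i, v i ^ 2 := by
    simp only [Finset.mul_sum, ← mul_pow, hk]
  rw [← mul_pow, hω, hp]
  field_simp
  field_simp at hγ
  linear_combination hγ

theorem boosted_rest_frame_solution (m c ℏ : ℝ) (hm : 0 < m) (hc : 0 < c) (hℏ : 0 < ℏ)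
    (v : Fin 3 → ℝ) (hv : Real.sqrt (∑ i, v i ^ 2) < c)
    (γ : ℝ) (hγ : γ = 1 / Real.sqrt (1 - (∑ i, v i ^ 2) / c ^ 2))
    (Ψ₀ : ℂ)
    (Ψ : (Fin 3 → ℝ) → ℝ → ℂ)
    (hΨ : ∀ r t, Ψ r t = Ψ₀ * Complex.exp ((I / (ℏ : ℂ)) *
      (-(((γ : ℂ) - 1) * (m : ℂ) * (c : ℂ) ^ 2 * (t : ℂ)) +
        (γ : ℂ) * (m : ℂ) * (↑(∑ i, v i * r i) : ℂ))))
    (ω : ℝ) (hω : ω = (γ - 1) * m * c ^ 2 / ℏ)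
    (k : Fin 3 → ℝ) (hk : ∀ i, k i = γ * m * v i / ℏ) :
    (∀ r t, Ψ r t = Ψ₀ * Complex.exp (I * ((↑(∑ i, k i * r i) : ℂ) - (ω : ℂ) * (t : ℂ)))) ∧
    (ℏ * ω = (γ - 1) * m * c ^ 2) ∧ (∀ i, ℏ * k i = γ * m * v i) ∧
    (∀ r t,
      -(((ℏ : ℂ) ^ 2) / (2 * (m : ℂ) * (c : ℂ) ^ 2)) *
          deriv (fun s => deriv (fun s' => Ψ r s') s) t
        + I * (ℏ : ℂ) * deriv (fun s => Ψ r s) t =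
      -(((ℏ : ℂ) ^ 2) / (2 * (m : ℂ))) *
          ∑ i, deriv (fun s => deriv (fun s' => Ψ (Function.update r i s') t) s) (r i)) := by
  have hℏω : ℏ * ω = (γ - 1) * m * c ^ 2 := by rw [hω]; field_simp
  have hℏk : ∀ i, ℏ * k i = γ * m * v i := fun i => by rw [hk i]; field_simp
  have hΨ_eq : Ψ = planeWave Ψ₀ k ω := by
    funext r t
    have hkr : ∑ i, k i * r i = γ * m / ℏ * ∑ i, v i * r i := by
      rw [Finset.mul_sum]
      exact Finset.sum_congr rfl fun i _ => by rw [hk]; ring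
    rw [hΨ, planeWave, hkr, hω]
    congr 2
    push_cast
    ring
  subst hΨ_eq
  refine ⟨fun _ _ => rfl, hℏω, hℏk, solvesFreeLCS_planeWave ?_ Ψ₀⟩
  exact kinetic_dispersion hm.ne' hc.ne' (lorentzFactor_sq_mul hc hv hγ) hℏω hℏk
end
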